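/- arXiv:1501.03074 — 3 statements merged into one kernel-verified Lean document; each statement's English description precedes it below -/
import Mathlib

section
/- Let F ⊆ G be fields of characteristic p with δ : G → G a derivation satisfying δ^p = 0 and G = F(ξ) with δ(ξ^i) = iξ^{i-1}. For 1 ≤ ℓ ≤ p, let A_ℓ ⊆ End_F(G) be the F-span of all operators Σ_{i=0}^{ℓ-1} μ_{g_i} ∘ δ^i with g_i ∈ G. Then A_ℓ · A_m = A_n where n = min(ℓ + m - 1, p) (the product being composition of endomorphisms in opposite order, i.e., in (End_F G)^op). -/
/-!
By Leibniz's rule, `δ^k ∘ μ_h = Σ_{i+j=k} C(k,i) μ_{δ^i h} ∘ δ^j`, so the product of `μ_g ∘ δ^i`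
and `μ_h ∘ δ^j` is a combination of operators `μ_a ∘ δ^t` with `t ≤ i + j`, and those with
`t ≥ p` vanish. Conversely `μ_g ∘ δ^(i+j) = (μ_g ∘ δ^i) ∘ δ^j`, and every `k < ℓ + m - 1` splits
as `i + j` with `i < ℓ` and `j < m`.
-/

variable {F G : Type} [Field F] [Field G] [Algebra F G]

/-- The `F`-subspace `A_ℓ ⊆ End_F(G)` spanned by the operators
`Σ_{i=0}^{ℓ-1} μ_{g_i} ∘ δ^i` with `g_i ∈ G`. -/
noncomputable def Asub (δ : Module.End F G) (ℓ : ℕ) : Submodule F (Module.End F G) :=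
  Submodule.span F
    {f | ∃ g : ℕ → G, f = ∑ i ∈ Finset.range ℓ, (LinearMap.mulLeft F (g i) : Module.End F G) * δ ^ i}

open Finset LinearMap

section Leibniz

variable {R A : Type*} [CommSemiring R] [CommSemiring A] [Algebra R A] {δ : Module.End R A}

theorem mul_mulLeft_of_leibniz (hδ : ∀ a b : A, δ (a * b) = a * δ b + δ a * b) (h : A) :
    δ * mulLeft R h = mulLeft R h * δ + mulLeft R (δ h) := by
  ext x
  simp [hδ]

theorem pow_mul_mulLeft_of_leibniz (hδ : ∀ a b : A, δ (a * b) = a * δ b + δ a * b)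
    (k : ℕ) (h : A) :
    δ ^ k * mulLeft R h =
      ∑ ij ∈ antidiagonal k, k.choose ij.1 • (mulLeft R ((δ ^ ij.1) h) * δ ^ ij.2) := by
  induction k with
  | zero => simp
  | succ k ih =>
    rw [sum_antidiagonal_choose_succ_nsmul (fun i j => mulLeft R ((δ ^ i) h) * δ ^ j), pow_succ',
      mul_assoc, ih, mul_sum, ← sum_add_distrib]
    refine sum_congr rfl fun ij hij => ?_
    rw [← Nat.choose_symm_of_eq_add (mem_antidiagonal.1 hij).symm, ← smul_add, mul_smul_comm,
      ← mul_assoc, mul_mulLeft_of_leibniz hδ, add_mul, mul_assoc, ← pow_succ',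
      pow_succ' δ ij.1, Module.End.mul_apply]

end Leibniz

section Asub

variable {δ : Module.End F G}

theorem Asub_eq_span (δ : Module.End F G) (ℓ : ℕ) :
    Asub δ ℓ = Submodule.span F {f | ∃ g t, t < ℓ ∧ f = mulLeft F g * δ ^ t} := by
  apply le_antisymm <;> rw [Asub, Submodule.span_le]
  · rintro _ ⟨g, rfl⟩
    exact Submodule.sum_mem _ fun i hi => Submodule.subset_span ⟨g i, i, mem_range.1 hi, rfl⟩
  · rintro _ ⟨g, t, ht, rfl⟩
    refine Submodule.subset_span ⟨Pi.single t g, ?_⟩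
    rw [sum_eq_single_of_mem t (mem_range.2 ht) fun i _ hi => by simp [hi], Pi.single_eq_same]

theorem mulLeft_mul_pow_mem_Asub {t ℓ : ℕ} (ht : t < ℓ) (g : G) :
    mulLeft F g * δ ^ t ∈ Asub δ ℓ := by
  rw [Asub_eq_span]
  exact Submodule.subset_span ⟨g, t, ht, rfl⟩

theorem Asub_mono {ℓ ℓ' : ℕ} (h : ℓ ≤ ℓ') : Asub δ ℓ ≤ Asub δ ℓ' := by
  rw [Asub_eq_span, Submodule.span_le]
  rintro _ ⟨g, t, ht, rfl⟩
  exact mulLeft_mul_pow_mem_Asub (ht.trans_le h) g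

theorem mulLeft_mul_pow_mem_Asub_min {p t ℓ : ℕ} (hδp : δ ^ p = 0) (ht : t < ℓ) (g : G) :
    mulLeft F g * δ ^ t ∈ Asub δ (min ℓ p) := by
  rcases lt_or_ge t p with htp | hpt
  · exact mulLeft_mul_pow_mem_Asub (lt_min ht htp) g
  · rw [pow_eq_zero_of_le hpt hδp, mul_zero]
    exact zero_mem _

theorem Asub_mul_Asub_le (hLeib : ∀ a b : G, δ (a * b) = a * δ b + δ a * b) {p : ℕ}
    (hδp : δ ^ p = 0) (ℓ m : ℕ) : Asub δ ℓ * Asub δ m ≤ Asub δ (min (ℓ + m - 1) p) := by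
  rw [Asub_eq_span, Asub_eq_span, Submodule.span_mul_span, Submodule.span_le]
  rintro _ ⟨_, ⟨g, i, hi, rfl⟩, _, ⟨h, j, hj, rfl⟩, rfl⟩
  change mulLeft F g * δ ^ i * (mulLeft F h * δ ^ j) ∈ Asub δ _
  rw [show mulLeft F g * δ ^ i * (mulLeft F h * δ ^ j) = mulLeft F g * (δ ^ i * mulLeft F h) * δ ^ j
    by simp only [mul_assoc], pow_mul_mulLeft_of_leibniz hLeib, mul_sum, sum_mul]
  refine Submodule.sum_mem _ fun ab hab => ?_
  rw [mul_smul_comm, smul_mul_assoc]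
  refine Submodule.smul_of_tower_mem _ _ ?_
  rw [← mul_assoc, Module.End.mul_eq_comp (mulLeft F g), ← mulLeft_mul, mul_assoc, ← pow_add]
  exact mulLeft_mul_pow_mem_Asub_min hδp (by have := mem_antidiagonal.1 hab; omega) _

theorem Asub_le_Asub_mul_Asub {ℓ m : ℕ} (hℓ : 1 ≤ ℓ) (hm : 1 ≤ m) :
    Asub δ (ℓ + m - 1) ≤ Asub δ ℓ * Asub δ m := by
  rw [Asub_eq_span δ (ℓ + m - 1), Submodule.span_le]
  rintro _ ⟨g, k, hk, rfl⟩
  obtain ⟨i, j, hi, hj, rfl⟩ : ∃ i j, i < ℓ ∧ j < m ∧ k = i + j :=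
    ⟨min k (ℓ - 1), k - min k (ℓ - 1), by omega, by omega, by omega⟩
  rw [pow_add, ← mul_assoc]
  exact Submodule.mul_mem_mul (mulLeft_mul_pow_mem_Asub hi g)
    (by simpa [← Module.End.one_eq_id] using mulLeft_mul_pow_mem_Asub (δ := δ) hj 1)

end Asub

theorem stmt_8_general (p : ℕ) (δ : Module.End F G)
    (hLeib : ∀ a b : G, δ (a * b) = a * δ b + δ a * b)
    (hδp : δ ^ p = 0) :
    ∀ ℓ m : ℕ, 1 ≤ ℓ → ℓ ≤ p → 1 ≤ m → m ≤ p →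
      Asub δ ℓ * Asub δ m = Asub δ (min (ℓ + m - 1) p) := fun ℓ m hℓ _ hm _ =>
  (Asub_mul_Asub_le hLeib hδp ℓ m).antisymm
    ((Asub_mono (min_le_left _ _)).trans (Asub_le_Asub_mul_Asub hℓ hm))

/-- For `G/F` purely inseparable of degree `p` with natural derivation `δ`,
`A_ℓ · A_m = A_{min(ℓ+m-1,p)}` for `1 ≤ ℓ, m ≤ p`. -/
theorem stmt_8 (p : ℕ) (hp : p.Prime) [CharP F p] (ξ : G) (q : F)
    (hξ : ξ ^ p = algebraMap F G q)
    (hbasis : ∃ b : Module.Basis (Fin p) F G, ∀ i : Fin p, b i = ξ ^ (i : ℕ))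
    (δ : Module.End F G)
    (hLeib : ∀ a b : G, δ (a * b) = a * δ b + δ a * b)
    (hδξ : ∀ i : ℕ, i < p → δ (ξ ^ i) = (i : G) * ξ ^ (i - 1))
    (hδp : δ ^ p = 0) :
    ∀ ℓ m : ℕ, 1 ≤ ℓ → ℓ ≤ p → 1 ≤ m → m ≤ p →
      Asub δ ℓ * Asub δ m = Asub δ (min (ℓ + m - 1) p) :=
  stmt_8_general p δ hLeib hδp
end

section
/- Let C be a full subcategory of Mod-Λ closed under isomorphisms and submodules. A pair of morphisms M →^u E →^v N in C is an exact pair (i.e., both Hom(W,-) and Hom(-,W) applied to it yield exact sequences 0 → Hom(W,M) → Hom(W,E) → Hom(W,N) and 0 → Hom(N,W) → Hom(E,W) → Hom(M,W) for all W ∈ C) if and only if 0 → M → E → N → 0 is an exact sequence of Λ-modules. -/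
/-!
Every test object the argument needs is a submodule of `M`, `E` or `N`, hence lies in `𝒞`.
Testing `Hom(W, -)` on `W = ker u` and `W = ker v` gives injectivity of `u` and `ker v ⊆ range u`.
For surjectivity, the corestriction `E → range v` kills `u`, so it factors through `v` as some
`s : N → range v`; then `incl ∘ s` and `id` agree after `v`, and left exactness of `Hom(-, N)`
makes `s` a section of the inclusion `range v → N`. The converse is the left exactness of both
Hom functors.
-/

namespace LinearMap

variable {R : Type*} [Ring R] {W M E N : Type*}
  [AddCommGroup W] [Module R W] [AddCommGroup M] [Module R M]
  [AddCommGroup E] [Module R E] [AddCommGroup N] [Module R N]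

lemma exists_comp_eq_of_range_le {u : M →ₗ[R] E} (hu : Function.Injective u) {g : W →ₗ[R] E}
    (hg : range g ≤ range u) : ∃ f : W →ₗ[R] M, g = u ∘ₗ f := by
  let e := LinearEquiv.ofInjective u hu
  refine ⟨e.symm.toLinearMap ∘ₗ g.codRestrict (range u) fun w ↦ hg ⟨w, rfl⟩, ?_⟩
  ext w
  exact congrArg Subtype.val (e.apply_symm_apply ⟨g w, _⟩).symm

lemma exists_comp_eq_of_ker_le {v : E →ₗ[R] N} (hv : Function.Surjective v) {g : E →ₗ[R] W}
    (hg : ker v ≤ ker g) : ∃ f : N →ₗ[R] W, g = f ∘ₗ v := by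
  let e := v.quotKerEquivOfSurjective hv
  refine ⟨(ker v).liftQ g hg ∘ₗ e.symm.toLinearMap, ?_⟩
  ext x
  have : e.symm (v x) = (ker v).mkQ x := e.symm_apply_eq.mpr rfl
  simp [this]

lemma injective_of_comp_eq_zero {u : M →ₗ[R] E}
    (hu : ∀ f : ker u →ₗ[R] M, u ∘ₗ f = 0 → f = 0) : Function.Injective u := by
  refine ker_eq_bot.mp (ker_eq_bot_of_cancel fun a b hab ↦ sub_eq_zero.mp (hu _ ?_))
  rw [comp_sub, hab, sub_self]

lemma surjective_of_comp_eq_zero {u : M →ₗ[R] E} {v : E →ₗ[R] N} (hvu : v ∘ₗ u = 0)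
    (hfac : ∀ g : E →ₗ[R] range v, g ∘ₗ u = 0 → ∃ f : N →ₗ[R] range v, g = f ∘ₗ v)
    (hv : ∀ f : N →ₗ[R] N, f ∘ₗ v = 0 → f = 0) : Function.Surjective v := by
  obtain ⟨s, hs⟩ := hfac v.rangeRestrict
    (by rw [← range_le_ker_iff, ker_rangeRestrict, range_le_ker_iff, hvu])
  have hsection : (range v).subtype ∘ₗ s = id := by
    refine sub_eq_zero.mp (hv _ ?_)
    rw [sub_comp, comp_assoc, ← hs, id_comp]
    ext; simp
  rw [← range_eq_top, eq_top_iff, ← range_id, ← hsection]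
  exact (range_comp_le_range s _).trans (Submodule.range_subtype _).le

lemma comp_eq_zero_iff_exists_eq_comp_of_injective {u : M →ₗ[R] E} {v : E →ₗ[R] N}
    (hu : Function.Injective u) (huv : range u = ker v) (g : W →ₗ[R] E) :
    v ∘ₗ g = 0 ↔ ∃ f : W →ₗ[R] M, g = u ∘ₗ f := by
  refine ⟨fun hg ↦ exists_comp_eq_of_range_le hu (huv ▸ range_le_ker_iff.mpr hg), ?_⟩
  rintro ⟨f, rfl⟩
  rw [← comp_assoc, range_le_ker_iff.mp huv.le, zero_comp]

lemma comp_eq_zero_iff_exists_eq_comp_of_surjective {u : M →ₗ[R] E} {v : E →ₗ[R] N}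
    (hv : Function.Surjective v) (huv : range u = ker v) (g : E →ₗ[R] W) :
    g ∘ₗ u = 0 ↔ ∃ f : N →ₗ[R] W, g = f ∘ₗ v := by
  refine ⟨fun hg ↦ exists_comp_eq_of_ker_le hv (huv ▸ range_le_ker_iff.mpr hg), ?_⟩
  rintro ⟨f, rfl⟩
  rw [comp_assoc, range_le_ker_iff.mp huv.le, comp_zero]

end LinearMap

open LinearMap in
theorem stmt_17_general (Λ : Type) [Ring Λ]
    (𝒞 : ∀ (M : Type) [AddCommGroup M] [Module Λᵐᵒᵖ M], Prop)
    (hsub : ∀ (M : Type) [AddCommGroup M] [Module Λᵐᵒᵖ M], 𝒞 M →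
      ∀ N : Submodule Λᵐᵒᵖ M, 𝒞 ↥N)
    (M E N : Type)
    [AddCommGroup M] [Module Λᵐᵒᵖ M] [AddCommGroup E] [Module Λᵐᵒᵖ E]
    [AddCommGroup N] [Module Λᵐᵒᵖ N]
    (hM : 𝒞 M) (hE : 𝒞 E) (hN : 𝒞 N)
    (u : M →ₗ[Λᵐᵒᵖ] E) (v : E →ₗ[Λᵐᵒᵖ] N) :
    (∀ (W : Type) [AddCommGroup W] [Module Λᵐᵒᵖ W], 𝒞 W →
      ((∀ f : W →ₗ[Λᵐᵒᵖ] M, u ∘ₗ f = 0 → f = 0) ∧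
       (∀ g : W →ₗ[Λᵐᵒᵖ] E, v ∘ₗ g = 0 ↔ ∃ f : W →ₗ[Λᵐᵒᵖ] M, g = u ∘ₗ f) ∧
       (∀ f : N →ₗ[Λᵐᵒᵖ] W, f ∘ₗ v = 0 → f = 0) ∧
       (∀ g : E →ₗ[Λᵐᵒᵖ] W, g ∘ₗ u = 0 ↔ ∃ f : N →ₗ[Λᵐᵒᵖ] W, g = f ∘ₗ v)))
    ↔
    (Function.Injective u ∧ LinearMap.range u = LinearMap.ker v ∧ Function.Surjective v) := by
  constructor
  · intro h
    have hvu : v ∘ₗ u = 0 := ((h M hM).2.1 u).mpr ⟨id, rfl⟩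
    have hker : ker v ≤ range u := by
      obtain ⟨f, hf⟩ := ((h _ (hsub E hE (ker v))).2.1 _).mp (comp_ker_subtype v)
      rw [← Submodule.range_subtype (ker v), hf]
      exact range_comp_le_range f u
    exact ⟨injective_of_comp_eq_zero (h _ (hsub M hM (ker u))).1,
      le_antisymm (range_le_ker_iff.mpr hvu) hker,
      surjective_of_comp_eq_zero hvu (fun g ↦ ((h _ (hsub N hN (range v))).2.2.2 g).mp)
        (h N hN).2.2.1⟩
  · rintro ⟨hu, huv, hv⟩ W _ _ _
    exact ⟨fun f hf ↦ (cancel_left hu).mp (hf.trans (comp_zero u).symm),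
      comp_eq_zero_iff_exists_eq_comp_of_injective hu huv,
      fun f hf ↦ (cancel_right hv).mp (hf.trans (zero_comp v).symm),
      comp_eq_zero_iff_exists_eq_comp_of_surjective hv huv⟩

/-- For a full subcategory `𝒞` of `Mod-Λ` closed under isomorphisms and submodules,
a pair of morphisms `M →ᵘ E →ᵛ N` in `𝒞` is an exact pair (both `Hom(W,-)` and
`Hom(-,W)` yield exact sequences for all `W ∈ 𝒞`) iff `0 → M → E → N → 0` is an
exact sequence of `Λ`-modules. -/
theorem stmt_17 (K Λ : Type) [Field K] [Ring Λ] [Algebra K Λ] [FiniteDimensional K Λ]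
    (𝒞 : ∀ (M : Type) [AddCommGroup M] [Module Λᵐᵒᵖ M], Prop)
    (hiso : ∀ (M N : Type) [AddCommGroup M] [Module Λᵐᵒᵖ M] [AddCommGroup N]
      [Module Λᵐᵒᵖ N], 𝒞 M → (M ≃ₗ[Λᵐᵒᵖ] N) → 𝒞 N)
    (hsub : ∀ (M : Type) [AddCommGroup M] [Module Λᵐᵒᵖ M], 𝒞 M →
      ∀ N : Submodule Λᵐᵒᵖ M, 𝒞 ↥N)
    (M E N : Type)
    [AddCommGroup M] [Module Λᵐᵒᵖ M] [AddCommGroup E] [Module Λᵐᵒᵖ E]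
    [AddCommGroup N] [Module Λᵐᵒᵖ N]
    (hM : 𝒞 M) (hE : 𝒞 E) (hN : 𝒞 N)
    (u : M →ₗ[Λᵐᵒᵖ] E) (v : E →ₗ[Λᵐᵒᵖ] N) :
    (∀ (W : Type) [AddCommGroup W] [Module Λᵐᵒᵖ W], 𝒞 W →
      ((∀ f : W →ₗ[Λᵐᵒᵖ] M, u ∘ₗ f = 0 → f = 0) ∧
       (∀ g : W →ₗ[Λᵐᵒᵖ] E, v ∘ₗ g = 0 ↔ ∃ f : W →ₗ[Λᵐᵒᵖ] M, g = u ∘ₗ f) ∧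
       (∀ f : N →ₗ[Λᵐᵒᵖ] W, f ∘ₗ v = 0 → f = 0) ∧
       (∀ g : E →ₗ[Λᵐᵒᵖ] W, g ∘ₗ u = 0 ↔ ∃ f : N →ₗ[Λᵐᵒᵖ] W, g = f ∘ₗ v)))
    ↔
    (Function.Injective u ∧ LinearMap.range u = LinearMap.ker v ∧ Function.Surjective v) :=
  stmt_17_general Λ 𝒞 hsub M E N hM hE hN u v
end

section
/- Let Λ be an algebra with decomposition Λ = S ⊕ J (S semisimple subalgebra, J the radical), {p_i, γ_i} a dual basis of the left S-module J with γ_i ∈ *J = Hom_S(J, S). Define the comultiplication μ : *J → *J ⊗_S *J by μ(γ) = Σ_{i,j} γ_i ⊗ γ_j·γ(p_j p_i). Then μ is coassociative: (μ ⊗ id)∘μ = (id ⊗ μ)∘μ. -/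
/-- The realization of a simple tensor `α ⊗ β ⊗ δ ∈ *J ⊗_S *J ⊗_S *J` as an
`S`-valued trilinear functional on `J`, iterating the identification
`Φ(ρ ⊗ ν)(a ⊗ b) = ν(a·ρ(b))`. -/
def realize {S J : Type} [Ring S] [AddCommGroup J] [Module Sᵐᵒᵖ J]
    (α β δ : J → S) (a b c : J) : S :=
  δ (MulOpposite.op (β (MulOpposite.op (α c) • b)) • a)

/-!
Under the realization `Φ`, both iterated comultiplications of `ν` evaluate on `a ⊗ b ⊗ c` to
`ν((ab)c)`. Each of the four sums is collapsed by the dual basis property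
`∑ i, γ i w • p i = w`: either against an `S`-linear functional in the form
`∑ j, γ j x * L (p j) = L x`, or inside an additive map in the form
`∑ i, f (γ i x • p i) = f x`.
Balancedness `(x · s) y = x (s · y)` moves the scalars produced by `Φ` to where they can be
collapsed, and associativity of `J` is needed once, for `(μ ⊗ id) ∘ μ`.
-/

open Finset MulOpposite

section DualBasis

variable {S J ι : Type*} [Ring S] [AddCommGroup J] [Module S J] [Fintype ι]
  {p : ι → J} {γ : ι → J →ₗ[S] S}

theorem sum_map_coord_smul {M F : Type*} [AddCommMonoid M] [FunLike F J M]
    [AddMonoidHomClass F J M] (hdual : ∀ w, ∑ i, γ i w • p i = w) (f : F) (x : J) :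
    ∑ i, f (γ i x • p i) = f x := by
  rw [← map_sum, hdual]

theorem sum_coord_mul_map (hdual : ∀ w, ∑ i, γ i w • p i = w) (L : J →ₗ[S] S) (x : J) :
    ∑ i, γ i x * L (p i) = L x := by
  simpa only [map_smul, smul_eq_mul] using sum_map_coord_smul hdual L x

variable (m : J → J → J)

def mulRightLinear (hadd1 : ∀ x y z : J, m (x + y) z = m x z + m y z)
    (hsl : ∀ (s : S) (x y : J), m (s • x) y = s • m x y) (q : J) : J →ₗ[S] J where
  toFun x := m x q
  map_add' x y := hadd1 x y q
  map_smul' s x := hsl s x q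

def mulLeftAddHom (hadd2 : ∀ x y z : J, m x (y + z) = m x y + m x z) (A : J) : J →+ J :=
  AddMonoidHom.mk' (m A) (hadd2 A)

theorem sum_coord_mul_map_mul_right (hdual : ∀ w, ∑ i, γ i w • p i = w)
    (hadd1 : ∀ x y z : J, m (x + y) z = m x z + m y z)
    (hsl : ∀ (s : S) (x y : J), m (s • x) y = s • m x y) (L : J →ₗ[S] S) (x q : J) :
    ∑ i, γ i x * L (m (p i) q) = L (m x q) :=
  sum_coord_mul_map hdual (L ∘ₗ mulRightLinear m hadd1 hsl q) x

theorem sum_map_mul_coord_smul {M F : Type*} [AddCommMonoid M] [FunLike F J M]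
    [AddMonoidHomClass F J M] (hdual : ∀ w, ∑ i, γ i w • p i = w)
    (hadd2 : ∀ x y z : J, m x (y + z) = m x y + m x z) (f : F) (A x : J) :
    ∑ i, f (m A (γ i x • p i)) = f (m A x) :=
  sum_map_coord_smul hdual ((f : J →+ M).comp (mulLeftAddHom m hadd2 A)) x

end DualBasis

section Balanced

variable {S J ι : Type*} [Ring S] [AddCommGroup J] [Module S J] [Module Sᵐᵒᵖ J] [Fintype ι]
  {p : ι → J} {γ : ι → J →ₗ[S] S} (m : J → J → J)

theorem mul_mul_op_smul (hsr : ∀ (s : Sᵐᵒᵖ) (x y : J), m x (s • y) = s • m x y)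
    (hbal : ∀ (s : S) (x y : J), m (op s • x) y = m x (s • y)) (s : S) (a b y : J) :
    m (m a (op s • b)) y = m (m a b) (s • y) := by
  rw [hsr, hbal]

theorem sum_map_mul_mul_op_coord_smul {M F : Type*} [AddCommMonoid M] [FunLike F J M]
    [AddMonoidHomClass F J M]
    (hdual : ∀ w, ∑ i, γ i w • p i = w)
    (hadd2 : ∀ x y z : J, m x (y + z) = m x y + m x z)
    (hsr : ∀ (s : Sᵐᵒᵖ) (x y : J), m x (s • y) = s • m x y)
    (hbal : ∀ (s : S) (x y : J), m (op s • x) y = m x (s • y)) (f : F) (a b c : J) :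
    ∑ i, f (m (m a (op (γ i c) • b)) (p i)) = f (m (m a b) c) := by
  simp only [mul_mul_op_smul m hsr hbal]
  exact sum_map_mul_coord_smul m hdual hadd2 f (m a b) c

end Balanced

section Comultiplication

variable {S J ι : Type} [Ring S] [AddCommGroup J] [Module S J] [Module Sᵐᵒᵖ J] [Fintype ι]
  {p : ι → J} {γ : ι → J →ₗ[S] S} (m : J → J → J)

theorem realize_rTensor_comul_comp_comul (hdual : ∀ w, ∑ i, γ i w • p i = w)
    (hadd1 : ∀ x y z : J, m (x + y) z = m x z + m y z)
    (hadd2 : ∀ x y z : J, m x (y + z) = m x y + m x z)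
    (hsl : ∀ (s : S) (x y : J), m (s • x) y = s • m x y)
    (hsr : ∀ (s : Sᵐᵒᵖ) (x y : J), m x (s • y) = s • m x y)
    (hbal : ∀ (s : S) (x y : J), m (op s • x) y = m x (s • y))
    (hassoc : ∀ x y z : J, m (m x y) z = m x (m y z)) (ν : J →ₗ[S] S) (a b c : J) :
    (∑ i, ∑ j, ∑ r, ∑ t,
        realize (fun x => γ r x) (fun x => γ t x * γ i (m (p t) (p r)))
          (fun x => γ j x * ν (m (p j) (p i))) a b c) = ν (m (m a b) c) := by
  simp only [realize]
  calc _ = ∑ i, ∑ r, ∑ t, ∑ j,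
        γ j (op (γ t (op (γ r c) • b) * γ i (m (p t) (p r))) • a) * ν (m (p j) (p i)) := by
        refine sum_congr rfl fun i _ => ?_
        rw [sum_comm]
        exact sum_congr rfl fun r _ => sum_comm
    _ = ∑ r, ∑ t, ∑ i,
          ν (m (op (γ t (op (γ r c) • b)) • a) (γ i (m (p t) (p r)) • p i)) := by
        simp only [sum_coord_mul_map_mul_right m hdual hadd1 hsl, op_mul, mul_smul, hbal]
        rw [sum_comm]
        exact sum_congr rfl fun r _ => sum_comm
    _ = ∑ r, ∑ t, ν (m (m a (γ t (op (γ r c) • b) • p t)) (p r)) := by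
        refine sum_congr rfl fun r _ => sum_congr rfl fun t _ => ?_
        rw [sum_map_mul_coord_smul m hdual hadd2 ν, ← hassoc, hbal]
    _ = ∑ r, ν (m (m a (op (γ r c) • b)) (p r)) :=
        sum_congr rfl fun r _ => sum_map_mul_coord_smul m hdual hadd2
          (ν ∘ₗ mulRightLinear m hadd1 hsl (p r)) a _
    _ = ν (m (m a b) c) := sum_map_mul_mul_op_coord_smul m hdual hadd2 hsr hbal ν a b c

theorem realize_lTensor_comul_comp_comul (hdual : ∀ w, ∑ i, γ i w • p i = w)
    (hadd1 : ∀ x y z : J, m (x + y) z = m x z + m y z)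
    (hadd2 : ∀ x y z : J, m x (y + z) = m x y + m x z)
    (hsl : ∀ (s : S) (x y : J), m (s • x) y = s • m x y)
    (hsr : ∀ (s : Sᵐᵒᵖ) (x y : J), m x (s • y) = s • m x y)
    (hbal : ∀ (s : S) (x y : J), m (op s • x) y = m x (s • y))
    (ν : J →ₗ[S] S) (a b c : J) :
    (∑ i, ∑ j, ∑ r, ∑ t,
        realize (fun x => γ i x) (fun x => γ r x)
          (fun x => γ t x * (γ j (m (p t) (p r)) * ν (m (p j) (p i)))) a b c) =
      ν (m (m a b) c) := by
  simp only [realize]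
  calc _ = ∑ i, ∑ j,
          (∑ r, γ j (m a (γ r (op (γ i c) • b) • p r))) * ν (m (p j) (p i)) := by
        simp only [← mul_assoc, ← sum_mul, sum_coord_mul_map_mul_right m hdual hadd1 hsl, hbal]
    _ = ∑ i, ν (m (m a (op (γ i c) • b)) (p i)) := by
        simp only [sum_map_mul_coord_smul m hdual hadd2,
          sum_coord_mul_map_mul_right m hdual hadd1 hsl]
    _ = ν (m (m a b) c) := sum_map_mul_mul_op_coord_smul m hdual hadd2 hsr hbal ν a b c

end Comultiplication

theorem stmt_18_general (S J : Type) [Ring S] [AddCommGroup J]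
    [Module S J] [Module Sᵐᵒᵖ J]
    (m : J → J → J)
    (hadd1 : ∀ x y z : J, m (x + y) z = m x z + m y z)
    (hadd2 : ∀ x y z : J, m x (y + z) = m x y + m x z)
    (hsl : ∀ (s : S) (x y : J), m (s • x) y = s • m x y)
    (hsr : ∀ (s : Sᵐᵒᵖ) (x y : J), m x (s • y) = s • m x y)
    (hbal : ∀ (s : S) (x y : J), m (MulOpposite.op s • x) y = m x (s • y))
    (hassoc : ∀ x y z : J, m (m x y) z = m x (m y z))
    (n : ℕ) (p : Fin n → J) (γ : Fin n → (J →ₗ[S] S))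
    (hdual : ∀ w : J, ∑ i, γ i w • p i = w) :
    ∀ (ν : J →ₗ[S] S) (a b c : J),
      (∑ i, ∑ j, ∑ r, ∑ t,
        realize (fun x => γ r x)
          (fun x => γ t x * γ i (m (p t) (p r)))
          (fun x => γ j x * ν (m (p j) (p i))) a b c) =
      (∑ i, ∑ j, ∑ r, ∑ t,
        realize (fun x => γ i x) (fun x => γ r x)
          (fun x => γ t x * (γ j (m (p t) (p r)) * ν (m (p j) (p i)))) a b c) := by
  intro ν a b c
  rw [realize_rTensor_comul_comp_comul m hdual hadd1 hadd2 hsl hsr hbal hassoc,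
    realize_lTensor_comul_comp_comul m hdual hadd1 hadd2 hsl hsr hbal]

/-- Coassociativity of the comultiplication `μ(γ) = Σ_{i,j} γ_i ⊗ γ_j·γ(p_j p_i)`
on `*J = Hom_S(J,S)`, for `J` the radical of `Λ = S ⊕ J` with dual basis
`{p_i, γ_i}` of the left `S`-module `J`:  `(μ ⊗ id)∘μ = (id ⊗ μ)∘μ`, stated via
the canonical realization of triple tensors as `S`-valued trilinear functionals. -/
theorem stmt_18 (S J : Type) [Ring S] [AddCommGroup J]
    [Module S J] [Module Sᵐᵒᵖ J] [SMulCommClass S Sᵐᵒᵖ J]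
    (m : J → J → J)
    (hadd1 : ∀ x y z : J, m (x + y) z = m x z + m y z)
    (hadd2 : ∀ x y z : J, m x (y + z) = m x y + m x z)
    (hsl : ∀ (s : S) (x y : J), m (s • x) y = s • m x y)
    (hsr : ∀ (s : Sᵐᵒᵖ) (x y : J), m x (s • y) = s • m x y)
    (hbal : ∀ (s : S) (x y : J), m (MulOpposite.op s • x) y = m x (s • y))
    (hassoc : ∀ x y z : J, m (m x y) z = m x (m y z))
    (n : ℕ) (p : Fin n → J) (γ : Fin n → (J →ₗ[S] S))
    (hdual : ∀ w : J, ∑ i, γ i w • p i = w) :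
    ∀ (ν : J →ₗ[S] S) (a b c : J),
      (∑ i, ∑ j, ∑ r, ∑ t,
        realize (fun x => γ r x)
          (fun x => γ t x * γ i (m (p t) (p r)))
          (fun x => γ j x * ν (m (p j) (p i))) a b c) =
      (∑ i, ∑ j, ∑ r, ∑ t,
        realize (fun x => γ i x) (fun x => γ r x)
          (fun x => γ t x * (γ j (m (p t) (p r)) * ν (m (p j) (p i)))) a b c) :=
  stmt_18_general S J m hadd1 hadd2 hsl hsr hbal hassoc n p γ hdual
end
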